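/- Assume conditions (P0)–(P3) hold for the sequence (q_{M_L}, φ_{M_L}) indexed by even positive integers L, and assume M_L² / log L → ∞ as L → ∞. Then lim_{L→∞} sup_{x ∈ T'_L} (1/L²) |∑_{y ∈ T'_L} e^{2πi x·y / L} / (1 − φ_{M_L}(2π y / L))| = 0. -/

import Mathlib

open Filter MeasureTheory Real Finset
open scoped BigOperators

noncomputable section

/-- `T_k = (−k/2, k/2]² ∩ ℤ²`. -/
def Tset (k : ℝ) : Finset (ℤ × ℤ) :=
  Finset.Ioc ⌊-k / 2⌋ ⌊k / 2⌋ ×ˢ Finset.Ioc ⌊-k / 2⌋ ⌊k / 2⌋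

/-- `Λ_k = [−k/2, k/2]² ∩ ℤ²`. -/
def Lam (k : ℝ) : Finset (ℤ × ℤ) :=
  Finset.Icc ⌈-k / 2⌉ ⌊k / 2⌋ ×ˢ Finset.Icc ⌈-k / 2⌉ ⌊k / 2⌋

open scoped Classical in
/-- `D_k = {x ∈ ℤ² : |x| ≤ k/2}` (Euclidean norm). -/
def Dset (k : ℝ) : Finset (ℤ × ℤ) :=
  (Lam k).filter fun x => Real.sqrt ((x.1 : ℝ) ^ 2 + (x.2 : ℝ) ^ 2) ≤ k / 2

/-- sup (ℓ∞) norm on ℝ². -/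
def supNorm (θ : ℝ × ℝ) : ℝ := max |θ.1| |θ.2|

/-- the closed ℓ∞-ball `B(r)` in ℝ². -/
def Bset (r : ℝ) : Set (ℝ × ℝ) := {θ | supNorm θ ≤ r}

/-- squared Euclidean norm `|θ|²` on ℝ². -/
def sqNormR (θ : ℝ × ℝ) : ℝ := θ.1 ^ 2 + θ.2 ^ 2

/-- squared Euclidean norm `|y|²` of a lattice point. -/
def sqNorm (y : ℤ × ℤ) : ℝ := (y.1 : ℝ) ^ 2 + (y.2 : ℝ) ^ 2

/-- dot product `θ · x` of θ ∈ ℝ² and x ∈ ℤ². -/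
def dotP (θ : ℝ × ℝ) (x : ℤ × ℤ) : ℝ := θ.1 * x.1 + θ.2 * x.2

/-- `e^{iθ·x}`. -/
def cexp (θ : ℝ × ℝ) (x : ℤ × ℤ) : ℂ := Complex.exp (Complex.I * (dotP θ x : ℂ))

/-- `e^{2πi x·y/L}`. -/
def eL (L : ℕ) (x y : ℤ × ℤ) : ℂ :=
  Complex.exp (2 * (π : ℂ) * Complex.I * ((x.1 * y.1 + x.2 * y.2 : ℤ) : ℂ) / (L : ℂ))

/-- the filter of large even natural numbers. -/
def evenAtTop : Filter ℕ := Filter.atTop ⊓ Filter.principal {n | Even n}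

/-- the Fourier point `2πy/L ∈ ℝ²`. -/
def fourierTheta (L : ℕ) (y : ℤ × ℤ) : ℝ × ℝ := (2 * π * y.1 / L, 2 * π * y.2 / L)

/-- the characteristic function `φ(θ) = ∑_x e^{iθ·x} q(x)` of a jump distribution
supported in `Λ_m`; it is real-valued by symmetry, so we take the real part. -/
def phiOf (m : ℕ) (qq : ℤ × ℤ → ℝ) (θ : ℝ × ℝ) : ℝ :=
  (∑ x ∈ Lam m, cexp θ x * (qq x : ℂ)).re

/-- Condition (P0): `q` is a symmetric probability distribution supported in
`Λ'_m = Λ_m \ {0}`, with values in [0,1] and equal, positive coordinate variances. -/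
def CondP0 (m : ℕ) (qq : ℤ × ℤ → ℝ) : Prop :=
  (∀ x, 0 ≤ qq x ∧ qq x ≤ 1) ∧
  (∀ x, x ∉ (Lam m).erase 0 → qq x = 0) ∧
  (∑ x ∈ (Lam m).erase 0, qq x = 1) ∧
  (∀ x, qq (-x) = qq x) ∧
  (∑ x ∈ Lam m, (x.1 : ℝ) ^ 2 * qq x = ∑ x ∈ Lam m, (x.2 : ℝ) ^ 2 * qq x) ∧
  (0 < ∑ x ∈ Lam m, (x.1 : ℝ) ^ 2 * qq x)

/-- Condition (P1) with constant `σ² = σ2`. -/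
def CondP1 (M : ℕ → ℕ) (q : ℕ → ℤ × ℤ → ℝ) (σ2 : ℝ) : Prop :=
  ∀ ε > (0 : ℝ), ∃ δ > (0 : ℝ), ∀ᶠ (L : ℕ) in evenAtTop, ∀ θ : ℝ × ℝ, θ ≠ 0 →
    supNorm θ ≤ δ / M L →
    (1 - phiOf (M L) (q L) θ) / (σ2 * (M L : ℝ) ^ 2 * sqNormR θ / 2)
      ∈ Set.Ioo (1 - ε) (1 + ε)

/-- Condition (P2). -/
def CondP2 (M : ℕ → ℕ) (q : ℕ → ℤ × ℤ → ℝ) : Prop :=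
  ∀ δ > (0 : ℝ), ∃ δ' > (0 : ℝ), ∃ ζ > (0 : ℝ), ∀ᶠ (L : ℕ) in evenAtTop, ∀ θ : ℝ × ℝ,
    supNorm θ ≤ δ' → ¬ supNorm θ ≤ δ / M L → 1 - phiOf (M L) (q L) θ > ζ

/-- Condition (P3). -/
def CondP3 (M : ℕ → ℕ) (q : ℕ → ℤ × ℤ → ℝ) : Prop :=
  ∀ ε > (0 : ℝ), ∀ a > (0 : ℝ), ∀ᶠ (L : ℕ) in evenAtTop, ∀ θ : ℝ × ℝ,
    supNorm θ ≤ π → ¬ supNorm θ ≤ a → |phiOf (M L) (q L) θ| < ε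

/-- `G_L(x,λ) = L⁻² ∑_{y ∈ T_L} e^{2πi x·y/L} / (1 + λ − φ_{M_L}(2πy/L))`. -/
def Gfun (M : ℕ → ℕ) (q : ℕ → ℤ × ℤ → ℝ) (L : ℕ) (x : ℤ × ℤ) (lam : ℝ) : ℂ :=
  ((L : ℂ) ^ 2)⁻¹ * ∑ y ∈ Tset L,
    eL L x y / ((1 + lam - phiOf (M L) (q L) (fourierTheta L y) : ℝ) : ℂ)

open scoped Classical in
/-- the annulus `A_L(α, v)`. -/
def Aset (L : ℕ) (α v : ℝ) : Finset (ℤ × ℤ) :=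
  if α = 0 then (Tset v).erase 0
  else if α = 1 then Tset L \ Tset (L / v)
  else Tset ((L : ℝ) ^ α * v) \ Tset ((L : ℝ) ^ α / v)

/-- the uniform distribution `u_m` on `Λ'_m = Λ_m \ {0}`. -/
def uunif (m : ℕ) (x : ℤ × ℤ) : ℝ :=
  if x ∈ (Lam m).erase 0 then (((Lam m).erase 0).card : ℝ)⁻¹ else 0

/-- `q_M(x) = c_M f(x/M) u_M(x)`. -/
def qMf (f : ℝ × ℝ → ℝ) (c : ℕ → ℝ) (m : ℕ) (x : ℤ × ℤ) : ℝ :=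
  c m * f ((x.1 : ℝ) / m, (x.2 : ℝ) / m) * uunif m x

/-! For `x ≠ 0` the characters `y ↦ e^{2πi x·y/L}` sum to zero over the torus, so writing
`1/(1 - φ) = 1 + φ/(1 - φ)` the sum is `-1 + ∑ e^{2πi x·y/L} φ/(1 - φ)`, and it suffices to show
`∑_{y ∈ T'_L} |φ|/(1 - φ) = o(L²)` with `φ` evaluated at `θ = 2πy/L`. For `‖θ‖∞ ≤ δ/M` (P1) gives
`1 - φ ≳ σ²M²|y|²/L²`, and `∑_{y ∈ T'_L} 1/|y|² = O(log L)`: this is where `M_L² ≫ log L` enters.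
For `δ/M < ‖θ‖∞ ≤ a` (P2) bounds the summand by `1/ζ` on `O(a²L²)` points, which is small once
`a` is chosen small in terms of `ζ`. For `‖θ‖∞ > a` (P3) makes `|φ|` uniformly small. -/

open scoped Topology

lemma sum_zpow_Ioc_eq_zero {K : Type*} [DivisionRing K] {A : K} {n : ℕ} (hA : A ^ n = 1)
    (hA1 : A ≠ 1) (a : ℤ) : ∑ u ∈ Ioc a (a + n), A ^ u = 0 := by
  obtain rfl | hn := eq_or_ne n 0
  · simp
  have hA0 : A ≠ 0 := by rintro rfl; exact zero_ne_one ((zero_pow hn).symm.trans hA)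
  rw [Int.Ioc_eq_finset_map, sum_map, add_sub_cancel_left, Int.toNat_natCast]
  simp only [Function.Embedding.trans_apply, Nat.castEmbedding_apply, addLeftEmbedding_apply,
    zpow_add₀ hA0, zpow_natCast, ← mul_sum, geom_sum_eq hA1, hA, sub_self, zero_div, mul_zero]

lemma Tset_two_mul (c : ℕ) :
    Tset ((2 * c : ℕ) : ℝ) = Ioc (-(c : ℤ)) c ×ˢ Ioc (-(c : ℤ)) c := by
  have hc : ((2 * c : ℕ) : ℝ) / 2 = ((c : ℤ) : ℝ) := by push_cast; ring
  have hc' : -((2 * c : ℕ) : ℝ) / 2 = ((-c : ℤ) : ℝ) := by push_cast; ring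
  rw [Tset, hc, hc', Int.floor_intCast, Int.floor_intCast]

lemma eL_eq_zpow (L : ℕ) (x y : ℤ × ℤ) :
    eL L x y = (Complex.exp (2 * π * Complex.I / L) ^ x.1) ^ y.1 *
      (Complex.exp (2 * π * Complex.I / L) ^ x.2) ^ y.2 := by
  rw [← zpow_mul, ← zpow_mul, ← Complex.exp_int_mul, ← Complex.exp_int_mul, ← Complex.exp_add, eL]
  congr 1
  push_cast
  ring

lemma sum_Tset_eL_eq_zero {c : ℕ} (hc : 0 < c) {x : ℤ × ℤ}
    (hx : x ∈ (Tset ((2 * c : ℕ) : ℝ)).erase 0) :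
    ∑ y ∈ Tset ((2 * c : ℕ) : ℝ), eL (2 * c) x y = 0 := by
  set ζ := Complex.exp (2 * π * Complex.I / (2 * c : ℕ))
  have hζ : IsPrimitiveRoot ζ (2 * c) := Complex.isPrimitiveRoot_exp _ (by omega)
  have hsum : ∀ t ∈ Ioc (-(c : ℤ)) c, t ≠ 0 → ∑ u ∈ Ioc (-(c : ℤ)) c, (ζ ^ t) ^ u = 0 := by
    intro t ht ht0
    have hpow : (ζ ^ t) ^ (2 * c) = 1 := by
      rw [← zpow_natCast, ← zpow_mul, mul_comm, zpow_mul, zpow_natCast, hζ.pow_eq_one, one_zpow]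
    have hne : ζ ^ t ≠ 1 := by
      rw [Ne, hζ.zpow_eq_one_iff_dvd]
      refine fun hdvd => ht0 (Int.eq_zero_of_abs_lt_dvd hdvd ?_)
      rw [mem_Ioc] at ht
      rw [abs_lt]
      push_cast
      omega
    have := sum_zpow_Ioc_eq_zero hpow hne (-(c : ℤ))
    rwa [show -(c : ℤ) + (2 * c : ℕ) = c by push_cast; ring] at this
  rw [Tset_two_mul, mem_erase, mem_product] at hx
  obtain ⟨hx0, hx1, hx2⟩ := hx
  simp_rw [Tset_two_mul, eL_eq_zpow, sum_product, ← mul_sum, ← sum_mul]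
  by_cases h1 : x.1 = 0
  · rw [hsum x.2 hx2 fun h2 => hx0 (Prod.ext h1 h2), mul_zero]
  · rw [hsum x.1 hx1 h1, zero_mul]

lemma sum_erase_eL_eq_neg_one {c : ℕ} (hc : 0 < c) {x : ℤ × ℤ}
    (hx : x ∈ (Tset ((2 * c : ℕ) : ℝ)).erase 0) :
    ∑ y ∈ (Tset ((2 * c : ℕ) : ℝ)).erase 0, eL (2 * c) x y = -1 := by
  have h0 : (0 : ℤ × ℤ) ∈ Tset ((2 * c : ℕ) : ℝ) := by
    rw [Tset_two_mul]; simp [hc]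
  have := add_sum_erase _ (eL (2 * c) x) h0
  rw [sum_Tset_eL_eq_zero hc hx, show eL (2 * c) x 0 = 1 by simp [eL]] at this
  linear_combination this

def natSupNorm (y : ℤ × ℤ) : ℕ := max y.1.natAbs y.2.natAbs

def intBox (k : ℕ) : Finset (ℤ × ℤ) := Icc (-(k : ℤ)) k ×ˢ Icc (-(k : ℤ)) k

lemma mem_intBox {k : ℕ} {y : ℤ × ℤ} : y ∈ intBox k ↔ natSupNorm y ≤ k := by
  simp only [intBox, natSupNorm, mem_product, mem_Icc, max_le_iff]
  omega

lemma card_intBox (k : ℕ) : #(intBox k) = (2 * k + 1) ^ 2 := by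
  rw [intBox, card_product, Int.card_Icc, sq]
  congr <;> omega

lemma card_filter_natSupNorm_eq_le (s : Finset (ℤ × ℤ)) {k : ℕ} (hk : 0 < k) :
    #(s.filter fun y => natSupNorm y = k) ≤ 8 * k := by
  obtain ⟨j, rfl⟩ := Nat.exists_eq_add_one_of_ne_zero hk.ne'
  have hsub : s.filter (fun y => natSupNorm y = j + 1) ⊆ intBox (j + 1) \ intBox j := by
    intro y hy
    rw [mem_filter] at hy
    rw [Finset.mem_sdiff, mem_intBox, mem_intBox]
    omega
  have hbox : intBox j ⊆ intBox (j + 1) :=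
    fun y hy => mem_intBox.2 ((mem_intBox.1 hy).trans (Nat.le_add_right j 1))
  calc #(s.filter fun y => natSupNorm y = j + 1) ≤ #(intBox (j + 1) \ intBox j) :=
        card_le_card hsub
    _ = 8 * (j + 1) := by
      rw [card_sdiff_of_subset hbox, card_intBox, card_intBox]
      exact Nat.sub_eq_of_eq_add (by ring)

lemma sq_natSupNorm_le_sqNorm (y : ℤ × ℤ) : (natSupNorm y : ℝ) ^ 2 ≤ sqNorm y := by
  rw [sqNorm, natSupNorm]
  rcases max_choice y.1.natAbs y.2.natAbs with h | h <;>
    rw [h, Nat.cast_natAbs, Int.cast_abs, sq_abs] <;> nlinarith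

/-- Sorting the lattice points by their ℓ∞ norm `k`, the shell of norm `k` has at most `8k`
points, each contributing at most `1/k²`. -/
lemma sum_inv_sqNorm_intBox_le (c : ℕ) :
    ∑ y ∈ (intBox c).erase 0, (sqNorm y)⁻¹ ≤ 8 * (1 + Real.log c) := by
  have hmaps : ∀ y ∈ (intBox c).erase 0, natSupNorm y ∈ Icc 1 c := by
    intro y hy
    rw [mem_erase, mem_intBox] at hy
    rw [mem_Icc]
    refine ⟨Nat.one_le_iff_ne_zero.2 fun h => hy.1 ?_, hy.2⟩
    simp only [natSupNorm, Nat.max_eq_zero_iff, Int.natAbs_eq_zero] at h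
    exact Prod.ext h.1 h.2
  have hshell : ∀ k ∈ Icc 1 c,
      ∑ y ∈ ((intBox c).erase 0).filter (fun y => natSupNorm y = k), (sqNorm y)⁻¹
        ≤ 8 * (k : ℝ)⁻¹ := by
    intro k hk
    have hk : (0 : ℝ) < k := by exact_mod_cast (mem_Icc.1 hk).1
    calc _ ≤ #(((intBox c).erase 0).filter (fun y => natSupNorm y = k)) • ((k : ℝ) ^ 2)⁻¹ := by
          refine sum_le_card_nsmul _ _ _ fun y hy => ?_
          rw [mem_filter] at hy
          have := sq_natSupNorm_le_sqNorm y
          rw [hy.2] at this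
          exact inv_anti₀ (by positivity) this
      _ ≤ (8 * k : ℕ) * ((k : ℝ) ^ 2)⁻¹ := by
          rw [nsmul_eq_mul]
          gcongr
          exact_mod_cast card_filter_natSupNorm_eq_le _ (by exact_mod_cast hk)
      _ = 8 * (k : ℝ)⁻¹ := by field_simp; push_cast; ring
  calc ∑ y ∈ (intBox c).erase 0, (sqNorm y)⁻¹
      = ∑ k ∈ Icc 1 c, ∑ y ∈ ((intBox c).erase 0).filter (fun y => natSupNorm y = k),
          (sqNorm y)⁻¹ := (sum_fiberwise_of_maps_to hmaps _).symm
    _ ≤ ∑ k ∈ Icc 1 c, 8 * (k : ℝ)⁻¹ := sum_le_sum hshell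
    _ = 8 * harmonic c := by rw [← mul_sum, harmonic_eq_sum_Icc]; push_cast; rfl
    _ ≤ 8 * (1 + Real.log c) := by gcongr; exact harmonic_le_one_add_log c

lemma sum_inv_sqNorm_Tset_le (c : ℕ) :
    ∑ y ∈ (Tset ((2 * c : ℕ) : ℝ)).erase 0, (sqNorm y)⁻¹ ≤ 8 * (1 + Real.log c) := by
  refine le_trans (sum_le_sum_of_subset_of_nonneg (erase_subset_erase _ ?_)
    fun y _ _ => inv_nonneg.2 (by unfold sqNorm; positivity)) (sum_inv_sqNorm_intBox_le c)
  rw [Tset_two_mul, intBox]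
  exact product_subset_product Ioc_subset_Icc_self Ioc_subset_Icc_self

lemma norm_eL (L : ℕ) (x y : ℤ × ℤ) : ‖eL L x y‖ = 1 := by
  rw [eL, show 2 * (π : ℂ) * Complex.I * ((x.1 * y.1 + x.2 * y.2 : ℤ) : ℂ) / L
      = ((2 * π * (x.1 * y.1 + x.2 * y.2 : ℤ) / L : ℝ) : ℂ) * Complex.I by push_cast; ring,
    Complex.norm_exp_ofReal_mul_I]

lemma sqNormR_fourierTheta (L : ℕ) (y : ℤ × ℤ) :
    sqNormR (fourierTheta L y) = (2 * π / L) ^ 2 * sqNorm y := by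
  rw [sqNormR, fourierTheta, sqNorm]
  ring

lemma fourierTheta_ne_zero {L : ℕ} (hL : L ≠ 0) {y : ℤ × ℤ} (hy : y ≠ 0) :
    fourierTheta L y ≠ 0 := by
  intro h
  simp only [fourierTheta, Prod.ext_iff, Prod.fst_zero, Prod.snd_zero, div_eq_zero_iff,
    mul_eq_zero, Nat.cast_eq_zero, Int.cast_eq_zero, hL, pi_ne_zero, two_ne_zero,
    or_false, false_or] at h
  exact hy (Prod.ext h.1 h.2)

lemma supNorm_fourierTheta_le_pi {c : ℕ} {y : ℤ × ℤ} (hy : y ∈ Tset ((2 * c : ℕ) : ℝ)) :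
    supNorm (fourierTheta (2 * c) y) ≤ π := by
  rw [Tset_two_mul, mem_product, mem_Ioc, mem_Ioc] at hy
  have key : ∀ t : ℤ, -(c : ℤ) < t → t ≤ c → |2 * π * t / ((2 * c : ℕ) : ℝ)| ≤ π := by
    intro t h1 h2
    have ht : |(t : ℝ)| ≤ c := by exact_mod_cast abs_le.2 ⟨by omega, h2⟩
    rw [abs_div, abs_mul, abs_of_pos two_pi_pos, Nat.abs_cast]
    exact div_le_of_le_mul₀ (by positivity) pi_pos.le (by push_cast; nlinarith [pi_pos])
  exact max_le (key _ hy.1.1 hy.1.2) (key _ hy.2.1 hy.2.2)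

lemma CondP0.abs_phiOf_le_one {m : ℕ} {qq : ℤ × ℤ → ℝ} (h : CondP0 m qq) (θ : ℝ × ℝ) :
    |phiOf m qq θ| ≤ 1 := by
  obtain ⟨hrange, hsupp, hsum, -⟩ := h
  calc |phiOf m qq θ| ≤ ‖∑ x ∈ Lam m, cexp θ x * (qq x : ℂ)‖ := Complex.abs_re_le_norm _
    _ ≤ ∑ x ∈ Lam m, ‖cexp θ x * (qq x : ℂ)‖ := norm_sum_le _ _
    _ = ∑ x ∈ (Lam m).erase 0, qq x := by
      rw [sum_erase _ (hsupp 0 (notMem_erase _ _))]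
      refine sum_congr rfl fun x _ => ?_
      rw [norm_mul, cexp, mul_comm Complex.I, Complex.norm_exp_ofReal_mul_I, one_mul,
        Complex.norm_real, Real.norm_of_nonneg (hrange x).1]
    _ = 1 := hsum

lemma norm_sum_div_one_sub_le {ι : Type*} (s : Finset ι) (e : ι → ℂ) (t : ι → ℝ)
    (he : ∀ i ∈ s, ‖e i‖ ≤ 1) (ht : ∀ i ∈ s, t i < 1) :
    ‖∑ i ∈ s, e i / ((1 - t i : ℝ) : ℂ)‖ ≤ ‖∑ i ∈ s, e i‖ + ∑ i ∈ s, |t i| / (1 - t i) := by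
  have hsplit : ∀ i ∈ s, e i / ((1 - t i : ℝ) : ℂ) = e i + e i * ((t i / (1 - t i) : ℝ) : ℂ) := by
    intro i hi
    have : (1 : ℂ) - t i ≠ 0 := by exact_mod_cast (sub_pos.2 (ht i hi)).ne'
    push_cast
    field_simp
    ring
  rw [sum_congr rfl hsplit, sum_add_distrib]
  refine (norm_add_le _ _).trans
    (add_le_add le_rfl ((norm_sum_le _ _).trans (sum_le_sum fun i hi => ?_)))
  rw [norm_mul, Complex.norm_real, Real.norm_eq_abs, abs_div, abs_of_pos (sub_pos.2 (ht i hi))]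
  exact mul_le_of_le_one_left (div_nonneg (abs_nonneg _) (sub_pos.2 (ht i hi)).le) (he i hi)

lemma card_Tset_two_mul (c : ℕ) : #(Tset ((2 * c : ℕ) : ℝ)) = (2 * c) ^ 2 := by
  rw [Tset_two_mul, card_product, Int.card_Ioc, sq]
  congr <;> omega

lemma card_filter_supNorm_fourierTheta_le {L : ℕ} (hL : 0 < L) {a : ℝ} (ha : 0 ≤ a)
    (s : Finset (ℤ × ℤ)) :
    (#(s.filter fun y => supNorm (fourierTheta L y) ≤ a) : ℝ) ≤ (a * L / π + 1) ^ 2 := by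
  set k := ⌊a * L / (2 * π)⌋₊
  have hsub : s.filter (fun y => supNorm (fourierTheta L y) ≤ a) ⊆ intBox k := by
    intro y hy
    rw [mem_filter, supNorm, max_le_iff] at hy
    have key : ∀ t : ℤ, |2 * π * t / L| ≤ a → t.natAbs ≤ k := by
      intro t ht
      rw [abs_div, abs_mul, abs_of_pos two_pi_pos, Nat.abs_cast,
        div_le_iff₀ (by exact_mod_cast hL)] at ht
      apply Nat.le_floor
      rw [Nat.cast_natAbs, Int.cast_abs, le_div_iff₀ two_pi_pos]
      linarith
    exact mem_intBox.2 (max_le (key _ hy.2.1) (key _ hy.2.2))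
  have hk : 2 * (k : ℝ) ≤ a * L / π := by
    have := Nat.floor_le (show 0 ≤ a * L / (2 * π) by positivity)
    rw [show a * L / π = 2 * (a * L / (2 * π)) by field_simp]
    linarith
  calc (#(s.filter fun y => supNorm (fourierTheta L y) ≤ a) : ℝ) ≤ #(intBox k) := by
        exact_mod_cast card_le_card hsub
    _ = (2 * k + 1) ^ 2 := by rw [card_intBox]; push_cast; ring
    _ ≤ (a * L / π + 1) ^ 2 := by gcongr

section Regions

variable {φ : ℝ × ℝ → ℝ} {σ2 m δ δ' a ζ η : ℝ}

lemma abs_div_one_sub_le_inv {t b : ℝ} (ht : |t| ≤ 1) (hb : 0 < b) (hbt : b < 1 - t) :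
    |t| / (1 - t) ≤ b⁻¹ := by
  rw [← one_div]
  exact div_le_div₀ zero_le_one ht hb hbt.le

lemma abs_div_one_sub_le_two_mul {t : ℝ} (ht : |t| < η) (hη : η ≤ 1 / 2) :
    |t| / (1 - t) ≤ 2 * η := by
  have : 1 / 2 ≤ 1 - t := by linarith [le_abs_self t]
  rw [div_le_iff₀ (by linarith)]
  nlinarith [abs_nonneg t]

lemma one_sub_pos_and_abs_div_le (hσ : 0 ≤ σ2) (hζ : 0 < ζ) (hη0 : 0 ≤ η) (hη : η ≤ 1 / 2)
    (ha : a ≤ δ') (hφ : ∀ θ, |φ θ| ≤ 1)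
    (h1 : ∀ θ, θ ≠ 0 → supNorm θ ≤ δ / m → 1 / 2 < (1 - φ θ) / (σ2 * m ^ 2 * sqNormR θ / 2))
    (h2 : ∀ θ, supNorm θ ≤ δ' → ¬ supNorm θ ≤ δ / m → 1 - φ θ > ζ)
    (h3 : ∀ θ, supNorm θ ≤ π → ¬ supNorm θ ≤ a → |φ θ| < η)
    {θ : ℝ × ℝ} (hθ : θ ≠ 0) (hθπ : supNorm θ ≤ π) :
    0 < 1 - φ θ ∧ |φ θ| / (1 - φ θ) ≤
      (σ2 * m ^ 2 * sqNormR θ / 4)⁻¹ + (if supNorm θ ≤ a then ζ⁻¹ else 0) + 2 * η := by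
  have hD : 0 ≤ (σ2 * m ^ 2 * sqNormR θ / 4)⁻¹ := by unfold sqNormR; positivity
  by_cases hI : supNorm θ ≤ δ / m
  · have hlow := h1 θ hθ hI
    -- since `x / 0 = 0`, (P1) at `θ` forces its denominator to be nonzero
    have hD2 : 0 < σ2 * m ^ 2 * sqNormR θ / 2 := by
      refine lt_of_le_of_ne (by unfold sqNormR; positivity) fun h => ?_
      rw [← h, div_zero] at hlow
      norm_num at hlow
    rw [lt_div_iff₀ hD2] at hlow
    have hpos : 0 < σ2 * m ^ 2 * sqNormR θ / 4 := by linarith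
    refine ⟨by linarith, (abs_div_one_sub_le_inv (hφ θ) hpos (by linarith)).trans ?_⟩
    split_ifs <;> linarith [inv_nonneg.2 hζ.le]
  by_cases hII : supNorm θ ≤ a
  · have hlow := h2 θ (hII.trans ha) hI
    refine ⟨hζ.trans hlow, ?_⟩
    rw [if_pos hII]
    linarith [abs_div_one_sub_le_inv (hφ θ) hζ hlow]
  · have hsmall := h3 θ hθπ hII
    refine ⟨by linarith [le_abs_self (φ θ)], ?_⟩
    rw [if_neg hII]
    linarith [abs_div_one_sub_le_two_mul hsmall hη]

lemma sum_majorant_le {c : ℕ} (hc : 0 < c) (hσ : 0 ≤ σ2) (hζ : 0 ≤ ζ) (hη0 : 0 ≤ η)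
    (ha : 0 ≤ a) (haL : π ≤ a * (2 * c : ℕ)) :
    ∑ y ∈ (Tset ((2 * c : ℕ) : ℝ)).erase 0,
        ((σ2 * m ^ 2 * sqNormR (fourierTheta (2 * c) y) / 4)⁻¹ +
          (if supNorm (fourierTheta (2 * c) y) ≤ a then ζ⁻¹ else 0) + 2 * η)
      ≤ (8 * (1 + Real.log c) / (σ2 * π ^ 2 * m ^ 2) + a ^ 2 / ζ + 2 * η) * (2 * c : ℕ) ^ 2 := by
  set L := 2 * c
  have hL : (0 : ℝ) < L := by positivity
  have h1 : ∑ y ∈ (Tset (L : ℝ)).erase 0, (σ2 * m ^ 2 * sqNormR (fourierTheta L y) / 4)⁻¹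
      ≤ 8 * (1 + Real.log c) / (σ2 * π ^ 2 * m ^ 2) * L ^ 2 := by
    simp_rw [sqNormR_fourierTheta]
    calc _ = L ^ 2 / (σ2 * π ^ 2 * m ^ 2) * ∑ y ∈ (Tset (L : ℝ)).erase 0, (sqNorm y)⁻¹ := by
          rw [mul_sum]; congr 1; ext y; field_simp; ring
      _ ≤ L ^ 2 / (σ2 * π ^ 2 * m ^ 2) * (8 * (1 + Real.log c)) := by
          gcongr; exact sum_inv_sqNorm_Tset_le c
      _ = _ := by ring
  have h2 : ∑ y ∈ (Tset (L : ℝ)).erase 0, (if supNorm (fourierTheta L y) ≤ a then ζ⁻¹ else 0)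
      ≤ a ^ 2 / ζ * L ^ 2 := by
    rw [sum_ite, sum_const_zero, add_zero, sum_const, nsmul_eq_mul]
    have hcount :=
      card_filter_supNorm_fourierTheta_le (L := L) (by omega) ha ((Tset (L : ℝ)).erase 0)
    have : (a * L / π + 1) ^ 2 ≤ (a * L) ^ 2 := by
      gcongr
      rw [div_add_one pi_ne_zero, div_le_iff₀ pi_pos]
      nlinarith [pi_gt_three]
    calc _ ≤ (a * L) ^ 2 * ζ⁻¹ := by gcongr; exact hcount.trans this
      _ = _ := by ring
  have h3 : ∑ _y ∈ (Tset (L : ℝ)).erase 0, 2 * η ≤ 2 * η * L ^ 2 := by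
    rw [sum_const, nsmul_eq_mul, mul_comm]
    gcongr
    exact_mod_cast (card_erase_le).trans (card_Tset_two_mul c).le
  rw [sum_add_distrib, sum_add_distrib]
  linarith

lemma norm_sum_div_one_sub_le_of_regions {c : ℕ} (hc : 0 < c) (hσ : 0 ≤ σ2) (hζ : 0 < ζ)
    (hη0 : 0 ≤ η) (hη : η ≤ 1 / 2) (ha0 : 0 ≤ a) (ha : a ≤ δ') (haL : π ≤ a * (2 * c : ℕ))
    (hφ : ∀ θ, |φ θ| ≤ 1)
    (h1 : ∀ θ, θ ≠ 0 → supNorm θ ≤ δ / m → 1 / 2 < (1 - φ θ) / (σ2 * m ^ 2 * sqNormR θ / 2))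
    (h2 : ∀ θ, supNorm θ ≤ δ' → ¬ supNorm θ ≤ δ / m → 1 - φ θ > ζ)
    (h3 : ∀ θ, supNorm θ ≤ π → ¬ supNorm θ ≤ a → |φ θ| < η)
    {x : ℤ × ℤ} (hx : x ∈ (Tset ((2 * c : ℕ) : ℝ)).erase 0) :
    ‖∑ y ∈ (Tset ((2 * c : ℕ) : ℝ)).erase 0,
        eL (2 * c) x y / ((1 - φ (fourierTheta (2 * c) y) : ℝ) : ℂ)‖
      ≤ 1 + (8 * (1 + Real.log c) / (σ2 * π ^ 2 * m ^ 2) + a ^ 2 / ζ + 2 * η) *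
        (2 * c : ℕ) ^ 2 := by
  have hpt := fun y (hy : y ∈ (Tset ((2 * c : ℕ) : ℝ)).erase 0) =>
    one_sub_pos_and_abs_div_le hσ hζ hη0 hη ha hφ h1 h2 h3
      (fourierTheta_ne_zero (by omega) (ne_of_mem_erase hy))
      (supNorm_fourierTheta_le_pi (mem_of_mem_erase hy))
  calc _ ≤ ‖∑ y ∈ (Tset ((2 * c : ℕ) : ℝ)).erase 0, eL (2 * c) x y‖ +
        ∑ y ∈ (Tset ((2 * c : ℕ) : ℝ)).erase 0,
          |φ (fourierTheta (2 * c) y)| / (1 - φ (fourierTheta (2 * c) y)) :=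
        norm_sum_div_one_sub_le _ _ _ (fun y _ => (norm_eL _ x y).le)
          fun y hy => sub_pos.1 (hpt y hy).1
    _ ≤ _ := by
        rw [sum_erase_eL_eq_neg_one hc hx, norm_neg, norm_one]
        gcongr
        exact (sum_le_sum fun y hy => (hpt y hy).2).trans
          (sum_majorant_le hc hσ hζ.le hη0 ha0 haL)

end Regions

lemma div_log_le_of_le_div_log {σ2 ε m : ℝ} {c : ℕ} (hσ : 0 < σ2) (hε : 0 < ε) (hc : 0 < c)
    (hm : 64 / (σ2 * π ^ 2 * ε) ≤ m ^ 2 / Real.log (2 * c : ℕ)) :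
    8 * (1 + Real.log c) / (σ2 * π ^ 2 * m ^ 2) ≤ ε / 4 := by
  have hc1 : (1 : ℝ) ≤ c := by exact_mod_cast hc
  have hlog : 1 + Real.log c ≤ 2 * Real.log (2 * c : ℕ) := by
    push_cast
    rw [Real.log_mul two_ne_zero (by positivity)]
    linarith [Real.log_two_gt_d9, Real.log_nonneg hc1]
  have hlogpos : 0 < Real.log (2 * c : ℕ) := Real.log_pos (by push_cast; linarith)
  rw [div_le_div_iff₀ (by positivity) hlogpos] at hm
  exact div_le_of_le_mul₀ (by positivity) (by positivity) (by nlinarith)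

theorem sum_over_torus_uniformly_small_general (M : ℕ → ℕ) (q : ℕ → ℤ × ℤ → ℝ) (σ2 : ℝ) (hσ : 0 < σ2)
    (hP0 : ∀ L : ℕ, Even L → 0 < L → CondP0 (M L) (q L))
    (hP1 : CondP1 M q σ2) (hP2 : CondP2 M q) (hP3 : CondP3 M q)
    (hM2 : Tendsto (fun L : ℕ => (M L : ℝ) ^ 2 / Real.log L) evenAtTop atTop) :
    ∀ ε > (0 : ℝ), ∀ᶠ (L : ℕ) in evenAtTop, ∀ x ∈ (Tset L).erase 0,
      ((L : ℝ) ^ 2)⁻¹ *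
          ‖∑ y ∈ (Tset L).erase 0,
              eL L x y / ((1 - phiOf (M L) (q L) (fourierTheta L y) : ℝ) : ℂ)‖
        < ε := by
  intro ε hε
  obtain ⟨δ, hδ, hP1⟩ := hP1 (1 / 2) one_half_pos
  obtain ⟨δ', hδ', ζ, hζ, hP2⟩ := hP2 δ hδ
  obtain ⟨a, ha, haδ', ha2⟩ : ∃ a, 0 < a ∧ a ≤ δ' ∧ a ^ 2 / ζ ≤ ε / 4 := by
    refine ⟨min δ' √(ε * ζ / 4), by positivity, min_le_left _ _, ?_⟩
    rw [div_le_iff₀ hζ]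
    calc _ ≤ √(ε * ζ / 4) ^ 2 := by gcongr; exact min_le_right _ _
      _ = ε / 4 * ζ := by rw [sq_sqrt (by positivity)]; ring
  set η := min (1 / 2) (ε / 8)
  have hinv : Tendsto (fun L : ℕ => ((L : ℝ) ^ 2)⁻¹) atTop (𝓝 0) := tendsto_inv_atTop_zero.comp
    ((tendsto_pow_atTop two_ne_zero).comp tendsto_natCast_atTop_atTop)
  have hle : evenAtTop ≤ atTop := inf_le_left
  filter_upwards [hP1, hP2, hP3 η (by positivity) a ha,
    hM2.eventually_ge_atTop (64 / (σ2 * π ^ 2 * ε)), mem_inf_of_right (mem_principal_self _),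
    (eventually_gt_atTop 0).filter_mono hle,
    ((tendsto_natCast_atTop_atTop.const_mul_atTop ha).eventually_ge_atTop π).filter_mono hle,
    (hinv.eventually_lt_const (by positivity : (0 : ℝ) < ε / 4)).filter_mono hle]
    with L h1 h2 h3 hM (hL : Even L) hL0 haL hLε x hx
  obtain ⟨c, rfl⟩ := hL.two_dvd
  have key := norm_sum_div_one_sub_le_of_regions (by omega) hσ.le hζ (by positivity)
    (min_le_left _ _) ha.le haδ' haL (hP0 _ hL hL0).abs_phiOf_le_one
    (fun θ hθ hs => lt_of_eq_of_lt (by norm_num) (h1 θ hθ hs).1) h2 h3 hx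
  calc _ ≤ (((2 * c : ℕ) : ℝ) ^ 2)⁻¹ * (1 + (8 * (1 + Real.log c) /
        (σ2 * π ^ 2 * (M (2 * c) : ℝ) ^ 2) + a ^ 2 / ζ + 2 * η) * (2 * c : ℕ) ^ 2) := by gcongr
    _ = (((2 * c : ℕ) : ℝ) ^ 2)⁻¹ + (8 * (1 + Real.log c) /
        (σ2 * π ^ 2 * (M (2 * c) : ℝ) ^ 2) + a ^ 2 / ζ + 2 * η) := by field_simp
    _ < ε := by
        linarith [div_log_le_of_le_div_log hσ hε (by omega : 0 < c) hM, min_le_right (1 / 2) (ε / 8)]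

/-- Equation (5.14): if (P0)–(P3) hold and `M_L²/log L → ∞`, then
`sup_{x ∈ T'_L} L⁻² |∑_{y ∈ T'_L} e^{2πi x·y/L}/(1 − φ_{M_L}(2πy/L))| → 0`. -/
theorem sum_over_torus_uniformly_small (M : ℕ → ℕ) (q : ℕ → ℤ × ℤ → ℝ) (σ2 : ℝ) (hσ : 0 < σ2)
    (hMeven : ∀ L : ℕ, Even (M L) ∧ 0 < M L)
    (hP0 : ∀ L : ℕ, Even L → 0 < L → CondP0 (M L) (q L))
    (hP1 : CondP1 M q σ2) (hP2 : CondP2 M q) (hP3 : CondP3 M q)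
    (hM2 : Tendsto (fun L : ℕ => (M L : ℝ) ^ 2 / Real.log L) evenAtTop atTop) :
    ∀ ε > (0 : ℝ), ∀ᶠ (L : ℕ) in evenAtTop, ∀ x ∈ (Tset L).erase 0,
      ((L : ℝ) ^ 2)⁻¹ *
          ‖∑ y ∈ (Tset L).erase 0,
              eL L x y / ((1 - phiOf (M L) (q L) (fourierTheta L y) : ℝ) : ℂ)‖
        < ε :=
  sum_over_torus_uniformly_small_general M q σ2 hσ hP0 hP1 hP2 hP3 hM2
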